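/- arXiv:1407.5937 — 7 statements merged into one kernel-verified Lean document; each statement's English description precedes it below -/
import Mathlib

section
/- A finite group admits a factorization as a setwise product of finitely many pairwise conjugate proper subgroups if and only if it is not nilpotent. -/
/-!
If `G` is nilpotent, a proper subgroup `A` lies in a maximal subgroup `M`, which is normal; so
every conjugate of `A`, and hence every product of conjugates of `A`, lies in `M ≠ G`.

Conversely, a non-normal maximal subgroup `H` has normal closure `G`. The product `P` of all
conjugates of `H` contains `1` and every conjugate of `H`, so it generates `G` as a monoid; since
`G` is finite the increasing powers `P ^ n` exhaust `G`, and `P ^ n` is a product of conjugates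
of `H`.
-/

open Pointwise

/-- The conjugate subgroup `A ^ g = g⁻¹ A g`. -/
def conjugate {G : Type*} [Group G] (A : Subgroup G) (g : G) : Subgroup G :=
  Subgroup.map (MulAut.conj g⁻¹).toMonoidHom A

theorem Submonoid.list_prod_subset {M : Type*} [Monoid M] (S : Submonoid M) {l : List (Set M)}
    (h : ∀ s ∈ l, s ⊆ S) : l.prod ⊆ S := by
  induction l with
  | nil => simp
  | cons s l ih =>
    rw [List.prod_cons, ← S.coe_mul_self_eq]
    exact Set.mul_subset_mul (h s List.mem_cons_self)
      (ih fun t ht => h t (List.mem_cons_of_mem s ht))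

namespace Set

variable {M : Type*} [Monoid M]

theorem one_mem_list_prod {l : List (Set M)} (h : ∀ s ∈ l, (1 : M) ∈ s) :
    (1 : M) ∈ l.prod := by
  induction l with
  | nil => simp
  | cons s l ih =>
    rw [List.prod_cons]
    exact ⟨1, h s List.mem_cons_self, 1, ih fun t ht => h t (List.mem_cons_of_mem s ht),
      one_mul 1⟩

theorem subset_list_prod_of_one_mem {l : List (Set M)} (h : ∀ s ∈ l, (1 : M) ∈ s) {s : Set M}
    (hs : s ∈ l) : s ⊆ l.prod := by
  induction l with
  | nil => simp at hs
  | cons t l ih =>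
    have h' : ∀ u ∈ l, (1 : M) ∈ u := fun u hu => h u (List.mem_cons_of_mem t hu)
    rw [List.prod_cons]
    rcases List.mem_cons.1 hs with rfl | hs
    · exact Set.subset_mul_left s (one_mem_list_prod h')
    · exact (ih h' hs).trans (Set.subset_mul_right _ (h t List.mem_cons_self))

theorem exists_mem_pow_of_mem_closure {s : Set M} {x : M} (hx : x ∈ Submonoid.closure s) :
    ∃ n, x ∈ s ^ n := by
  induction hx using Submonoid.closure_induction with
  | mem x hx => exact ⟨1, by simpa using hx⟩
  | one => exact ⟨0, by simp⟩
  | mul x y _ _ hx hy =>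
    obtain ⟨m, hm⟩ := hx
    obtain ⟨n, hn⟩ := hy
    exact ⟨m + n, pow_add s m n ▸ Set.mul_mem_mul hm hn⟩

theorem exists_pow_eq_closure [Finite M] {s : Set M} (hs : 1 ∈ s) :
    ∃ n, ∀ m ≥ n, s ^ m = Submonoid.closure s := by
  choose! k hk using fun x (hx : x ∈ Submonoid.closure s) => exists_mem_pow_of_mem_closure hx
  obtain ⟨n, hn⟩ := (Set.finite_range k).bddAbove
  refine ⟨n, fun m hm => Subset.antisymm (fun x hx => ?_) fun x hx => ?_⟩
  · exact Submonoid.closure_pow_le (Submonoid.subset_closure hx)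
  · exact pow_subset_pow_right hs ((hn ⟨x, rfl⟩).trans hm) (hk x hx)

end Set

section Conjugate

variable {G : Type*} [Group G]

theorem conjugate_eq_conj_smul (A : Subgroup G) (g : G) :
    conjugate A g = MulAut.conj g⁻¹ • A :=
  rfl

theorem conjugate_conjugate (A : Subgroup G) (a b : G) :
    conjugate (conjugate A a) b = conjugate A (a * b) := by
  simp only [conjugate_eq_conj_smul, smul_smul, ← map_mul, mul_inv_rev]

theorem conjugate_eq_top_iff {A : Subgroup G} {g : G} : conjugate A g = ⊤ ↔ A = ⊤ :=
  (Subgroup.map_injective (MulAut.conj g⁻¹).injective).eq_iff'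
    (Subgroup.map_top_of_surjective _ (MulAut.conj g⁻¹).surjective)

theorem conjugate_le_of_le_normal {A M : Subgroup G} [M.Normal] (h : A ≤ M) (g : G) :
    conjugate A g ≤ M :=
  (Subgroup.map_mono h).trans_eq (Subgroup.Normal.conj_smul_eq_self g⁻¹ M)

theorem conjugatesOfSet_subset_iUnion_conjugate (H : Subgroup G) :
    Group.conjugatesOfSet (H : Set G) ⊆ ⋃ g, (conjugate H g : Set G) := by
  intro y hy
  obtain ⟨a, ha, hay⟩ := Group.mem_conjugatesOfSet_iff.1 hy
  obtain ⟨c, rfl⟩ := isConj_iff.1 hay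
  refine Set.mem_iUnion.2 ⟨c⁻¹, ?_⟩
  rw [conjugate_eq_conj_smul, inv_inv]
  exact Subgroup.smul_mem_pointwise_smul a (MulAut.conj c) H ha

theorem normalClosure_eq_top_of_isCoatom {H : Subgroup G} (hH : IsCoatom H) (hN : ¬ H.Normal) :
    Subgroup.normalClosure (H : Set G) = ⊤ := by
  refine (Subgroup.le_normalClosure.lt_or_eq).elim (hH.2 _) fun h => ?_
  exact absurd (h ▸ Subgroup.normalClosure_normal) hN

end Conjugate

section Covering

variable {G : Type*} [Group G]

theorem Group.isNilpotent_iff_forall_isCoatom_normal [Finite G] :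
    Group.IsNilpotent G ↔ ∀ H : Subgroup G, IsCoatom H → H.Normal :=
  Group.isNilpotent_of_finite_tfae.out 0 2

def IsConjugateProductCovering (l : List (Subgroup G)) : Prop :=
  2 ≤ l.length ∧ (∀ A ∈ l, A ≠ ⊤) ∧ (∀ A ∈ l, ∀ B ∈ l, ∃ g : G, B = conjugate A g) ∧
    (l.map ((↑) : Subgroup G → Set G)).prod = Set.univ

theorem IsConjugateProductCovering.not_isNilpotent [Finite G] {l : List (Subgroup G)}
    (hl : IsConjugateProductCovering l) : ¬ Group.IsNilpotent G := by
  obtain ⟨hlen, hne, hconj, hprod⟩ := hl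
  intro hnil
  obtain ⟨A, hA⟩ := List.exists_mem_of_length_pos (by omega : 0 < l.length)
  obtain ⟨M, hM, hAM⟩ := (eq_top_or_exists_le_coatom A).resolve_left (hne A hA)
  have : M.Normal := Group.isNilpotent_iff_forall_isCoatom_normal.mp hnil M hM
  have hsub : (l.map ((↑) : Subgroup G → Set G)).prod ⊆ M := by
    refine M.toSubmonoid.list_prod_subset (List.forall_mem_map.2 fun B hB => ?_)
    obtain ⟨g, rfl⟩ := hconj A hA B hB
    exact conjugate_le_of_le_normal hAM g
  exact hM.1 (eq_top_iff.2 fun x _ => hsub (hprod ▸ Set.mem_univ x))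

theorem exists_isConjugateProductCovering_of_not_isNilpotent [Finite G]
    (h : ¬ Group.IsNilpotent G) : ∃ l : List (Subgroup G), IsConjugateProductCovering l := by
  obtain ⟨H, hH, hHN⟩ : ∃ H : Subgroup G, IsCoatom H ∧ ¬ H.Normal := by
    simpa [Group.isNilpotent_iff_forall_isCoatom_normal] using h
  obtain ⟨elems, -, hmem⟩ := Finite.exists_univ_list G
  set L := elems.map (conjugate H)
  set P := (L.map ((↑) : Subgroup G → Set G)).prod
  have hL1 : ∀ s ∈ L.map ((↑) : Subgroup G → Set G), (1 : G) ∈ s := by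
    simp [L]
  have hconjP : Group.conjugatesOfSet (H : Set G) ⊆ P := by
    refine (conjugatesOfSet_subset_iUnion_conjugate H).trans (Set.iUnion_subset fun g => ?_)
    exact Set.subset_list_prod_of_one_mem hL1 (List.mem_map_of_mem (List.mem_map_of_mem (hmem g)))
  have hclosure : Submonoid.closure P = ⊤ := by
    rw [eq_top_iff, ← Subgroup.top_toSubmonoid, ← normalClosure_eq_top_of_isCoatom hH hHN,
      Subgroup.normalClosure, Subgroup.closure_toSubmonoid_of_finite]
    exact Submonoid.closure_mono hconjP
  obtain ⟨n, hn⟩ := Set.exists_pow_eq_closure (Set.one_mem_list_prod hL1)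
  refine ⟨(List.replicate (n + 2) L).flatten, ?_, ?_, ?_, ?_⟩
  · have : 0 < elems.length := List.length_pos_of_mem (hmem 1)
    simp only [List.length_flatten, List.map_replicate, List.sum_replicate, List.length_map,
      smul_eq_mul, L]
    nlinarith
  · simp [L, conjugate_eq_top_iff, hH.1]
  · simp only [List.mem_flatten, List.mem_replicate, L]
    rintro _ ⟨_, ⟨-, rfl⟩, hA⟩ _ ⟨_, ⟨-, rfl⟩, hB⟩
    obtain ⟨a, -, rfl⟩ := List.mem_map.1 hA
    obtain ⟨b, -, rfl⟩ := List.mem_map.1 hB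
    exact ⟨a⁻¹ * b, by rw [conjugate_conjugate, mul_inv_cancel_left]⟩
  · rw [List.map_flatten, List.map_replicate, List.prod_flatten, List.map_replicate,
      List.prod_replicate, hn (n + 2) (by omega), hclosure]
    rfl

end Covering

theorem stmt_4 (G : Type*) [Group G] [Finite G] :
    (∃ l : List (Subgroup G), 2 ≤ l.length ∧
        (∀ A ∈ l, A ≠ ⊤) ∧ (∀ A ∈ l, ∀ B ∈ l, ∃ g : G, B = conjugate A g) ∧
        (l.map (fun A => (A : Set G))).prod = Set.univ) ↔
      ¬ Group.IsNilpotent G := by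
  -- With an unannotated binder, `l.map (fun A => (A : Set G))` elaborates as the identity map
  -- over the list `do let a ← l; pure ↑a`, obtained by coercing `l` through the list monad.
  simp only [List.map_id_fun', id_eq, bind_pure_comp]
  exact ⟨fun ⟨_, hl⟩ => IsConjugateProductCovering.not_isNilpotent hl,
    exists_isConjugateProductCovering_of_not_isNilpotent⟩
end

section
/- Let G be a finite non-nilpotent group such that G/N is nilpotent for every nontrivial normal subgroup N of G. Then G has a core-free maximal subgroup, i.e., G admits a faithful primitive permutation action. -/
/-!
Since `G` is not nilpotent, some maximal subgroup `M` is not normal. If its normal core `N` were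
nontrivial, `G ⧸ N` would be nilpotent; the image of `M` is maximal there, hence normal (nilpotent
groups satisfy the normalizer condition), and so its preimage `M` would be normal in `G`.
-/

namespace Subgroup

variable {G H : Type*} [Group G] [Group H]

lemma isCoatom_map_of_surjective {φ : G →* H} (hφ : Function.Surjective φ) {M : Subgroup G}
    (hM : IsCoatom M) (hker : φ.ker ≤ M) : IsCoatom (M.map φ) := by
  have hcomap : (M.map φ).comap φ = M := comap_map_eq_self hker
  refine ⟨fun htop => hM.1 ?_, fun K hK => ?_⟩
  · rw [← hcomap, htop, comap_top]
  · have hlt : M < K.comap φ := hcomap ▸ (comap_lt_comap_of_surjective hφ).mpr hK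
    exact comap_injective hφ (by rw [hM.2 _ hlt, comap_top])

lemma normal_of_isCoatom_of_isNilpotent_quotient {M N : Subgroup G} [N.Normal]
    (hM : IsCoatom M) (hNM : N ≤ M) [Group.IsNilpotent (G ⧸ N)] : M.Normal := by
  have hker : (QuotientGroup.mk' N).ker ≤ M := by rwa [QuotientGroup.ker_mk']
  have hcoatom := isCoatom_map_of_surjective (QuotientGroup.mk'_surjective N) hM hker
  have hnormal := (NormalizerCondition.normal_of_coatom _ Group.normalizerCondition_of_isNilpotent
    hcoatom).comap (QuotientGroup.mk' N)
  rwa [comap_map_eq_self hker] at hnormal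

end Subgroup

theorem stmt_8 (G : Type*) [Group G] [Finite G]
    (hG : ¬ Group.IsNilpotent G)
    (hq : ∀ (N : Subgroup G) [N.Normal], N ≠ ⊥ → Group.IsNilpotent (G ⧸ N)) :
    ∃ M : Subgroup G, IsCoatom M ∧ M.normalCore = ⊥ := by
  have hnonnormal : ¬ ∀ M : Subgroup G, IsCoatom M → M.Normal :=
    fun h => hG ((Group.isNilpotent_of_finite_tfae.out 2 0).mp h)
  push Not at hnonnormal
  obtain ⟨M, hM, hMnormal⟩ := hnonnormal
  refine ⟨M, hM, by_contra fun hcore => hMnormal ?_⟩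
  have := hq M.normalCore hcore
  exact Subgroup.normal_of_isCoatom_of_isNilpotent_quotient hM M.normalCore_le
end

section
/- Let G = V ⋊ K be in the minimal solvable setting (V elementary abelian unique minimal normal subgroup, K nontrivial nilpotent irreducible complement, trivial center). Then for every v ∈ V there exists t ∈ V such that v belongs to the setwise product K·K^t. -/
/-!
Take `z ≠ 1` in the center of the nilpotent group `K`. Since `V` is abelian and normal,
`v ↦ ⁅z, v⁆` is a homomorphism `V → V`, and its image is `K`-invariant because `z` is central
in `K`. By irreducibility the image is trivial or all of `V`; it is not trivial, since `K` acts
faithfully. Hence every `v ∈ V` is `⁅z, w⁆ = z * (w z⁻¹ w⁻¹)` for some `w ∈ V`, which lies in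
`K * K ^ w⁻¹`.
-/

open Pointwise

open scoped commutatorElement

section commutatorHom

variable {G : Type*} [Group G] (V : Subgroup G) [V.Normal]

theorem commutatorElement_mem_of_normal (g : G) {v : G} (hv : v ∈ V) : ⁅g, v⁆ ∈ V :=
  mul_mem (Subgroup.Normal.conj_mem ‹_› v hv g) (inv_mem hv)

variable [IsMulCommutative V]

def commutatorHom (g : G) : V →* G :=
  MonoidHom.mk' (fun v => ⁅g, (v : G)⁆) fun a b => by
    have hab : (a : G) * ⁅g, (b : G)⁆ = ⁅g, (b : G)⁆ * a :=
      congrArg Subtype.val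
        (IsMulCommutative.is_comm.comm a ⟨_, commutatorElement_mem_of_normal V g b.2⟩)
    calc ⁅g, ((a * b : V) : G)⁆ = ⁅g, (a : G)⁆ * ((a : G) * ⁅g, (b : G)⁆ * (a : G)⁻¹) := by
          simp only [Subgroup.coe_mul, commutatorElement_def]; group
      _ = ⁅g, (a : G)⁆ * ⁅g, (b : G)⁆ := by rw [hab, mul_inv_cancel_right]

@[simp]
theorem commutatorHom_apply (g : G) (v : V) : commutatorHom V g v = ⁅g, (v : G)⁆ :=
  rfl

theorem range_commutatorHom_le (g : G) : (commutatorHom V g).range ≤ V := by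
  rintro _ ⟨v, rfl⟩
  exact commutatorElement_mem_of_normal V g v.2

theorem conj_mem_range_commutatorHom {g x w : G} (hxg : x * g = g * x)
    (hw : w ∈ (commutatorHom V g).range) : x * w * x⁻¹ ∈ (commutatorHom V g).range := by
  obtain ⟨v, rfl⟩ := hw
  refine ⟨⟨x * v * x⁻¹, Subgroup.Normal.conj_mem ‹_› _ v.2 x⟩, ?_⟩
  have hxgx : x * g * x⁻¹ = g := by rw [hxg, mul_inv_cancel_right]
  rw [commutatorHom_apply, commutatorHom_apply, conjugate_commutatorElement, hxgx]

theorem range_commutatorHom_eq_bot_iff (g : G) :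
    (commutatorHom V g).range = ⊥ ↔ ∀ v ∈ V, g * v * g⁻¹ = v := by
  simp only [MonoidHom.range_eq_bot_iff, DFunLike.ext_iff, commutatorHom_apply,
    MonoidHom.one_apply, commutatorElement_eq_one_iff_mul_comm, mul_inv_eq_iff_eq_mul,
    Subtype.forall]

end commutatorHom

theorem commutatorElement_mem_mul_conjugate {G : Type*} [Group G] {K : Subgroup G} {k : G}
    (hk : k ∈ K) (w : G) : ⁅k, w⁆ ∈ (K : Set G) * (conjugate K w⁻¹ : Set G) :=
  ⟨k, hk, w * k⁻¹ * w⁻¹, ⟨k⁻¹, inv_mem hk, by simp [MulAut.conj]⟩, by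
    simp only [commutatorElement_def, mul_assoc]⟩

theorem stmt_13_general {G : Type*} [Group G]
    (V K : Subgroup G)
    -- V is elementary abelian of order p^n
    (hVnorm : V.Normal) (hVab : ∀ a ∈ V, ∀ b ∈ V, a * b = b * a)
    -- K is a nontrivial nilpotent complement to V with p ∤ |K|
    (hKne : K ≠ ⊥) (hKnil : Group.IsNilpotent K)
    -- K acts faithfully and irreducibly on V
    (hfaith : ∀ x ∈ K, (∀ v ∈ V, x * v * x⁻¹ = v) → x = 1)
    (hirr : ∀ W : Subgroup G, W ≤ V → (∀ x ∈ K, ∀ w ∈ W, x * w * x⁻¹ ∈ W) →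
      W = ⊥ ∨ W = V) :
    ∀ v ∈ V, ∃ t ∈ V, v ∈ (K : Set G) * ((conjugate K t : Subgroup G) : Set G) := by
  have : IsMulCommutative V := ⟨⟨fun a b => Subtype.ext (hVab _ a.2 _ b.2)⟩⟩
  have : Nontrivial K := (Subgroup.nontrivial_iff_ne_bot K).mpr hKne
  obtain ⟨⟨z, hzK⟩, hz⟩ :=
    Subgroup.ne_bot_iff_exists_ne_one.mp (Group.IsNilpotent.center_ne_bot K)
  have hzcomm (x : G) (hx : x ∈ K) : x * z = z * x :=
    congrArg Subtype.val (Subgroup.mem_center_iff.mp hzK ⟨x, hx⟩)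
  have hrange : (commutatorHom V z).range = V := by
    refine (hirr _ (range_commutatorHom_le V z)
      fun x hx w hw => conj_mem_range_commutatorHom V (hzcomm x hx) hw).resolve_left ?_
    intro hbot
    exact hz (Subtype.ext (Subtype.ext
      (hfaith z z.2 ((range_commutatorHom_eq_bot_iff V z).mp hbot))))
  intro v hv
  obtain ⟨w, rfl⟩ := (SetLike.ext_iff.mp hrange v).mpr hv
  exact ⟨(w : G)⁻¹, inv_mem w.2, commutatorElement_mem_mul_conjugate z.2 w⟩

theorem stmt_13 {G : Type*} [Group G] [Finite G] (p n : ℕ) (hp : p.Prime) (hn : 1 ≤ n)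
    (V K : Subgroup G)
    -- V is elementary abelian of order p^n
    (hVnorm : V.Normal) (hcardV : Nat.card V = p ^ n)
    (helem : ∀ v ∈ V, v ^ p = 1) (hVab : ∀ a ∈ V, ∀ b ∈ V, a * b = b * a)
    -- K is a nontrivial nilpotent complement to V with p ∤ |K|
    (hKne : K ≠ ⊥) (hKnil : Group.IsNilpotent K)
    (hcompl1 : V ⊓ K = ⊥) (hcompl2 : V ⊔ K = ⊤)
    (hcop : ¬ p ∣ Nat.card K)
    -- K acts faithfully and irreducibly on V
    (hfaith : ∀ x ∈ K, (∀ v ∈ V, x * v * x⁻¹ = v) → x = 1)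
    (hirr : ∀ W : Subgroup G, W ≤ V → (∀ x ∈ K, ∀ w ∈ W, x * w * x⁻¹ ∈ W) →
      W = ⊥ ∨ W = V)
    -- V is the unique minimal normal subgroup of G
    (hVne : V ≠ ⊥) (hmin : ∀ N : Subgroup G, N.Normal → N ≠ ⊥ → V ≤ N)
    -- G has trivial center
    (hZ : Subgroup.center G = ⊥) :
    ∀ v ∈ V, ∃ t ∈ V, v ∈ (K : Set G) * ((conjugate K t : Subgroup G) : Set G) :=
  stmt_13_general V K hVnorm hVab hKne hKnil hfaith hirr
end

section
/- Let G = V ⋊ K be in the minimal solvable setting with |V| = p^n. Then G is a setwise product of at most 2n(⌈log₂ p⌉) conjugates of K; in particular γ_cp(G) ≤ 2n(log₂ p + 1). -/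
open Pointwise

/-!
Pick `z ≠ 1` in the centre of `K`. By irreducibility and faithfulness `z` centralizes no
nontrivial element of `V`, so `t ↦ t⁻¹ z t` maps `V` injectively, hence bijectively, onto the
coset `z V`. Thus every `u ∈ V` equals `z⁻¹ (t⁻¹ z t)` for some `t ∈ V`, and
`{1, u} ⊆ K K^t`. Writing the coordinates of `v ∈ V` with respect to `n` generators in binary
makes `V` a product of `n ⌈log₂ p⌉` sets `{1, u}`, so `G = K V` is a product of as many sets
`K K^t`, the leading `K` being absorbed by the first one.
-/

open Subgroup

theorem pow_mem_prod_pair_pow_two_pow {M : Type*} [Monoid M] (a : M) {L m : ℕ} (hm : m < 2 ^ L) :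
    a ^ m ∈ ((List.range L).map fun j => ({1, a ^ 2 ^ j} : Set M)).prod := by
  induction L generalizing a m with
  | zero => simp_all
  | succ L ih =>
    have hsplit : a ^ m = a ^ (m % 2) * (a ^ 2) ^ (m / 2) := by
      rw [← pow_mul, ← pow_add, Nat.mod_add_div]
    have hpow : (List.range L).map (fun j => ({1, a ^ 2 ^ (j + 1)} : Set M))
        = (List.range L).map fun j => ({1, (a ^ 2) ^ 2 ^ j} : Set M) := by
      simp only [← pow_mul, ← pow_succ']
    rw [List.range_succ_eq_map, List.map_cons, List.map_map, List.prod_cons, hsplit]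
    refine Set.mul_mem_mul ?_ ?_
    · rcases Nat.mod_two_eq_zero_or_one m with h | h <;> simp [h]
    · simpa [Function.comp_def, hpow] using ih (a ^ 2) (by omega)

theorem zpowers_subset_prod_pair_pow_two_pow {G : Type*} [Group G] {a : G} (ha : IsOfFinOrder a)
    {L : ℕ} (hL : orderOf a ≤ 2 ^ L) :
    (zpowers a : Set G) ⊆ ((List.range L).map fun j => ({1, a ^ 2 ^ j} : Set G)).prod := by
  classical
  intro x hx
  obtain ⟨m, hm, rfl⟩ := Finset.mem_image.mp (ha.mem_zpowers_iff_mem_range_orderOf.mp hx)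
  exact pow_mem_prod_pair_pow_two_pow a ((Finset.mem_range.mp hm).trans_le hL)

theorem exists_list_prod_zpowers_eq_univ {p : ℕ} (hp : p.Prime) (n : ℕ) {A : Type*}
    [CommGroup A] (hcard : Nat.card A = p ^ n) (hexp : ∀ a : A, a ^ p = 1) :
    ∃ l : List A, l.length = n ∧ (l.map fun a => (zpowers a : Set A)).prod = Set.univ := by
  induction n generalizing A with
  | zero =>
    have : Subsingleton A := (Nat.card_eq_one_iff_unique.mp hcard).1
    exact ⟨[], rfl, by simp [Set.eq_univ_iff_forall, Subsingleton.elim _ (1 : A)]⟩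
  | succ n ih =>
    have : Finite A := Nat.finite_of_card_ne_zero (by simp [hcard, hp.ne_zero])
    have : Nontrivial A := Finite.one_lt_card_iff_nontrivial.mp
      (hcard ▸ Nat.one_lt_pow n.succ_ne_zero hp.one_lt)
    obtain ⟨a, ha⟩ := exists_ne (1 : A)
    have hcardQ : Nat.card (A ⧸ zpowers a) = p ^ n := by
      have : Fact p.Prime := ⟨hp⟩
      have horder : orderOf a = p := orderOf_eq_prime (hexp a) ha
      have h := card_eq_card_quotient_mul_card_subgroup (zpowers a)
      rw [hcard, Nat.card_zpowers, horder, pow_succ] at h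
      exact (Nat.eq_of_mul_eq_mul_right hp.pos h).symm
    have hexpQ : ∀ q : A ⧸ zpowers a, q ^ p = 1 := by
      rintro ⟨x⟩
      exact congrArg QuotientGroup.mk (hexp x)
    obtain ⟨lQ, hlen, hcover⟩ := ih hcardQ hexpQ
    refine ⟨a :: lQ.map Quotient.out, by simp [hlen], Set.eq_univ_of_forall fun g => ?_⟩
    have himage : QuotientGroup.mk' (zpowers a) ''
        ((lQ.map Quotient.out).map fun b => (zpowers b : Set A)).prod = Set.univ := by
      rw [Set.image_list_prod, ← hcover, List.map_map, List.map_map]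
      congr 2
      ext q : 1
      have h := (QuotientGroup.mk' (zpowers a)).map_zpowers q.out
      rw [QuotientGroup.mk'_apply, QuotientGroup.out_eq'] at h
      exact congrArg SetLike.coe h
    obtain ⟨x, hx, hxg⟩ := himage.symm ▸ Set.mem_univ (QuotientGroup.mk' _ g)
    rw [List.map_cons, List.prod_cons]
    refine ⟨x⁻¹ * g, QuotientGroup.eq.mp hxg, x, hx, by simp [mul_comm x⁻¹ g]⟩

theorem exists_list_prod_pair_eq_univ {p : ℕ} (hp : p.Prime) (n : ℕ) {A : Type*} [CommGroup A]
    (hcard : Nat.card A = p ^ n) (hexp : ∀ a : A, a ^ p = 1) :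
    ∃ l : List A, l.length = n * Nat.clog 2 p ∧
      (l.map fun a => ({1, a} : Set A)).prod = Set.univ := by
  obtain ⟨l, hlen, hcover⟩ := exists_list_prod_zpowers_eq_univ hp n hcard hexp
  refine ⟨l.flatMap fun a => (List.range (Nat.clog 2 p)).map (a ^ 2 ^ ·), by simp [hlen],
    Set.eq_univ_of_univ_subset ?_⟩
  rw [← hcover, List.map_flatMap, List.flatMap_def, List.prod_flatten, List.map_map]
  refine List.prod_le_prod' fun a _ => ?_
  simpa only [Function.comp_def, List.map_map] using
    zpowers_subset_prod_pair_pow_two_pow (isOfFinOrder_iff_pow_eq_one.mpr ⟨p, hp.pos, hexp a⟩)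
      ((orderOf_le_of_pow_eq_one hp.pos (hexp a)).trans (Nat.le_pow_clog one_lt_two p))

theorem Subgroup.exists_list_prod_pair_eq {G : Type*} [Group G] {p : ℕ} (hp : p.Prime) (n : ℕ)
    (V : Subgroup G) (hcard : Nat.card V = p ^ n) (hexp : ∀ v ∈ V, v ^ p = 1)
    (hcomm : ∀ a ∈ V, ∀ b ∈ V, a * b = b * a) :
    ∃ l : List G, l.length = n * Nat.clog 2 p ∧ (∀ u ∈ l, u ∈ V) ∧
      (l.map fun u => ({1, u} : Set G)).prod = V := by
  let _ : CommGroup V := { mul_comm a b := Subtype.ext (hcomm a a.2 b b.2) }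
  obtain ⟨l, hlen, hcover⟩ :=
    exists_list_prod_pair_eq_univ hp n hcard fun v => Subtype.ext (hexp v v.2)
  refine ⟨l.map V.subtype, by simp [hlen], fun u hu => ?_, ?_⟩
  · obtain ⟨v, -, rfl⟩ := List.mem_map.mp hu
    exact v.2
  · calc ((l.map V.subtype).map fun u => ({1, u} : Set G)).prod
        = ((l.map fun a => ({1, a} : Set V)).map (V.subtype '' ·)).prod := by
          simp only [List.map_map, Function.comp_def, Set.image_pair, map_one]
      _ = V := by rw [← Set.image_list_prod, hcover, Set.image_univ, coe_subtype,
          Subtype.range_coe]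

theorem conjugate_one {G : Type*} [Group G] (K : Subgroup G) : conjugate K 1 = K := by
  ext
  simp [conjugate]

theorem inf_centralizer_eq_bot_of_irreducible {G : Type*} [Group G] {V K : Subgroup G}
    (hV : V.Normal) (hfaith : ∀ x ∈ K, (∀ v ∈ V, x * v * x⁻¹ = v) → x = 1)
    (hirr : ∀ W : Subgroup G, W ≤ V → (∀ x ∈ K, ∀ w ∈ W, x * w * x⁻¹ ∈ W) →
      W = ⊥ ∨ W = V)
    {z : G} (hzK : z ∈ K) (hz : ∀ k ∈ K, k * z = z * k) (hz1 : z ≠ 1) :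
    V ⊓ centralizer {z} = ⊥ := by
  refine (hirr _ inf_le_left fun x hx w hw => ?_).resolve_right fun h => hz1 ?_
  · obtain ⟨hwV, hwz⟩ := mem_inf.mp hw
    refine mem_inf.mpr ⟨hV.conj_mem w hwV x, mem_centralizer_singleton_iff.mpr ?_⟩
    have hxz : Commute x z := hz x hx
    exact ((hxz.mul_left (mem_centralizer_singleton_iff.mp hwz)).mul_left hxz.inv_left).eq
  · refine hfaith z hzK fun v hv => ?_
    have hvz := mem_centralizer_singleton_iff.mp (mem_inf.mp (h ▸ hv)).2
    rw [← hvz, mul_inv_cancel_right]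

theorem exists_conj_eq_mul {G : Type*} [Group G] {V : Subgroup G} (hV : V.Normal) [Finite V]
    {z : G} (hz : V ⊓ centralizer {z} = ⊥) {u : G} (hu : u ∈ V) :
    ∃ t ∈ V, t⁻¹ * z * t = z * u := by
  let f : V → V := fun t => ⟨z⁻¹ * (t⁻¹ * z * t), by
    simpa [mul_assoc] using mul_mem (hV.conj_mem _ (inv_mem t.2) z⁻¹) t.2⟩
  have hf : Function.Injective f := by
    intro s t hst
    have hconj : (s : G)⁻¹ * z * s = (t : G)⁻¹ * z * t :=
      mul_left_cancel (congrArg Subtype.val hst)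
    have h : (t : G) * (s : G)⁻¹ ∈ V ⊓ centralizer {z} := by
      refine mem_inf.mpr ⟨mul_mem t.2 (inv_mem s.2), mem_centralizer_singleton_iff.mpr ?_⟩
      calc (t : G) * (s : G)⁻¹ * z = t * ((s : G)⁻¹ * z * s) * (s : G)⁻¹ := by group
        _ = z * (t * (s : G)⁻¹) := by rw [hconj]; group
    rw [hz, mem_bot, mul_inv_eq_one] at h
    exact (Subtype.ext h).symm
  obtain ⟨t, ht⟩ := Finite.injective_iff_surjective.mp hf ⟨u, hu⟩
  exact ⟨t, t.2, inv_mul_eq_iff_eq_mul.mp (congrArg Subtype.val ht)⟩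

theorem pair_subset_mul_conjugate {G : Type*} [Group G] {K : Subgroup G} {z t u : G}
    (hzK : z ∈ K) (h : t⁻¹ * z * t = z * u) : ({1, u} : Set G) ⊆ K * conjugate K t := by
  rintro x (rfl | rfl)
  · exact ⟨1, K.one_mem, 1, (conjugate K t).one_mem, one_mul 1⟩
  · refine ⟨z⁻¹, inv_mem hzK, t⁻¹ * z * t, mem_map.mpr ⟨z, hzK, by simp⟩, ?_⟩
    simp [h]

theorem Subgroup.coe_mul_prod_map_coe_mul {G ι : Type*} [Group G] (K : Subgroup G)
    {l : List ι} (hl : l ≠ []) (S : ι → Set G) :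
    (K : Set G) * (l.map fun i => K * S i).prod = (l.map fun i => K * S i).prod := by
  obtain ⟨i, l, rfl⟩ := List.exists_cons_of_ne_nil hl
  simp only [List.map_cons, List.prod_cons, ← mul_assoc]
  rw [← coe_toSubmonoid, Submonoid.coe_mul_self_eq]

theorem stmt_15_general {G : Type*} [Group G] (p n : ℕ) (hp : p.Prime) (hn : 1 ≤ n)
    (V K : Subgroup G)
    -- V is elementary abelian of order p^n
    (hVnorm : V.Normal) (hcardV : Nat.card V = p ^ n)
    (helem : ∀ v ∈ V, v ^ p = 1) (hVab : ∀ a ∈ V, ∀ b ∈ V, a * b = b * a)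
    -- K is a nontrivial nilpotent complement to V with p ∤ |K|
    (hKne : K ≠ ⊥) (hKnil : Group.IsNilpotent K)
    (hcompl2 : V ⊔ K = ⊤)
    -- K acts faithfully and irreducibly on V
    (hfaith : ∀ x ∈ K, (∀ v ∈ V, x * v * x⁻¹ = v) → x = 1)
    (hirr : ∀ W : Subgroup G, W ≤ V → (∀ x ∈ K, ∀ w ∈ W, x * w * x⁻¹ ∈ W) →
      W = ⊥ ∨ W = V) :
    ∃ l : List (Subgroup G), l.length ≤ 2 * n * Nat.clog 2 p ∧
      (∀ A ∈ l, ∃ g : G, A = conjugate K g) ∧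
      (l.map (fun A => (A : Set G))).prod = Set.univ := by
  have : Finite V := Nat.finite_of_card_ne_zero (by simp [hcardV, hp.ne_zero])
  have : Nontrivial K := (nontrivial_iff_ne_bot K).mpr hKne
  obtain ⟨⟨⟨z, hzK⟩, hz⟩, hz1⟩ :=
    ne_bot_iff_exists_ne_one.mp (Group.IsNilpotent.center_ne_bot K)
  have hfix : V ⊓ centralizer {z} = ⊥ :=
    inf_centralizer_eq_bot_of_irreducible hVnorm hfaith hirr hzK
      (fun k hk => congrArg Subtype.val (mem_center_iff.mp hz ⟨k, hk⟩)) (by simpa using hz1)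
  choose! t _ ht using fun u (hu : u ∈ V) => exists_conj_eq_mul hVnorm hfix hu
  obtain ⟨l, hlen, hlV, hcover⟩ := V.exists_list_prod_pair_eq hp n hcardV helem hVab
  have hl : l ≠ [] := by
    rintro rfl
    exact Nat.mul_ne_zero (by omega) (Nat.clog_pos one_lt_two hp.two_le).ne' hlen.symm
  refine ⟨l.flatMap fun u => [K, conjugate K (t u)], by simp [hlen]; linarith, ?_, ?_⟩
  · simp only [List.mem_flatMap, List.mem_cons, List.not_mem_nil, or_false]
    rintro A ⟨u, -, hA | hA⟩
    exacts [⟨1, hA.trans (conjugate_one K).symm⟩, ⟨t u, hA⟩]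
  · -- the coercion `List (Subgroup G) → List (Set G)` in the statement elaborates to a list bind
    suffices (l.map fun u => (K : Set G) * conjugate K (t u)).prod = Set.univ by
      simpa [List.flatMap_def, List.prod_flatten, Function.comp_def]
    refine Set.eq_univ_of_univ_subset ?_
    calc Set.univ = (K : Set G) * (V : Set G) := by rw [← mul_normal, sup_comm, hcompl2, coe_top]
      _ ⊆ (K : Set G) * (l.map fun u => (K : Set G) * conjugate K (t u)).prod :=
          Set.mul_subset_mul_left (hcover ▸ List.prod_le_prod' fun u hu =>
            pair_subset_mul_conjugate hzK (ht u (hlV u hu)))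
      _ = _ := K.coe_mul_prod_map_coe_mul hl _

theorem stmt_15 {G : Type*} [Group G] [Finite G] (p n : ℕ) (hp : p.Prime) (hn : 1 ≤ n)
    (V K : Subgroup G)
    -- V is elementary abelian of order p^n
    (hVnorm : V.Normal) (hcardV : Nat.card V = p ^ n)
    (helem : ∀ v ∈ V, v ^ p = 1) (hVab : ∀ a ∈ V, ∀ b ∈ V, a * b = b * a)
    -- K is a nontrivial nilpotent complement to V with p ∤ |K|
    (hKne : K ≠ ⊥) (hKnil : Group.IsNilpotent K)
    (hcompl1 : V ⊓ K = ⊥) (hcompl2 : V ⊔ K = ⊤)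
    (hcop : ¬ p ∣ Nat.card K)
    -- K acts faithfully and irreducibly on V
    (hfaith : ∀ x ∈ K, (∀ v ∈ V, x * v * x⁻¹ = v) → x = 1)
    (hirr : ∀ W : Subgroup G, W ≤ V → (∀ x ∈ K, ∀ w ∈ W, x * w * x⁻¹ ∈ W) →
      W = ⊥ ∨ W = V)
    -- V is the unique minimal normal subgroup of G
    (hVne : V ≠ ⊥) (hmin : ∀ N : Subgroup G, N.Normal → N ≠ ⊥ → V ≤ N)
    -- all complements to V are conjugate to K
    (hconj : ∀ K' : Subgroup G, V ⊓ K' = ⊥ → V ⊔ K' = ⊤ → ∃ g : G, K' = conjugate K g) :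
    ∃ l : List (Subgroup G), l.length ≤ 2 * n * Nat.clog 2 p ∧
      (∀ A ∈ l, ∃ g : G, A = conjugate K g) ∧
      (l.map (fun A => (A : Set G))).prod = Set.univ :=
  stmt_15_general p n hp hn V K hVnorm hcardV helem hVab hKne hKnil hcompl2 hfaith hirr
end

section
/- For n ≥ 1, let X_n be the set of integers of the form Σ_{i=0}^{h} (−1)^i 2^{a_i} with 0 ≤ h ≤ n−1 and 0 ≤ a_0 < a_1 < ... < a_h ≤ n−1. Then X_n = {x ∈ ℤ : −2^{n−1}+1 ≤ x ≤ 2^{n−1}} \ {0}. -/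
/-- `X n`: the set of alternating-sign sums `∑ (-1)^i * 2^(a i)` of distinct powers of 2
with strictly increasing exponents `a 0 < a 1 < ... < a h ≤ n - 1`. -/
def altSums (n : ℕ) : Set ℤ :=
  {x : ℤ | ∃ h : ℕ, h ≤ n - 1 ∧ ∃ a : ℕ → ℕ, StrictMonoOn a (Set.Iic h) ∧ a h ≤ n - 1 ∧
    x = ∑ i ∈ Finset.range (h + 1), (-1 : ℤ) ^ i * 2 ^ (a i)}

/-!
The sign of `S = ∑_{i ≤ h} (-1)^i 2^(a i)` is that of its top term `(-1)^h 2^(a h)`, and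
`-2^(a h) < S ≤ 2^(a h)`: adding the next term `∓ 2^(a (h+1))`, which dominates `2^(a h)`, flips
the sign and keeps the bounds. Conversely, any nonzero `x` in `(-2^(m+1), 2^(m+1)]` outside
`(-2^m, 2^m]` is either `2^(m+1)` or `y ∓ 2^(m+1)` for some nonzero `y` in `(-2^m, 2^m]`, and the
sign of `y` is exactly the one that lets a representation of `y` be extended by the exponent `m+1`.
-/

open Finset

def altSum (a : ℕ → ℕ) (h : ℕ) : ℤ :=
  ∑ i ∈ range (h + 1), (-1) ^ i * 2 ^ a i

theorem altSum_succ (a : ℕ → ℕ) (h : ℕ) :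
    altSum a (h + 1) = altSum a h - (-1) ^ h * 2 ^ a (h + 1) := by
  rw [altSum, sum_range_succ, ← altSum, pow_succ]
  ring

section altSum

variable {a : ℕ → ℕ} {h m : ℕ}

theorem altSum_congr {b : ℕ → ℕ} (hab : ∀ i ≤ h, a i = b i) : altSum a h = altSum b h :=
  sum_congr rfl fun i hi ↦ by rw [hab i (Nat.lt_succ_iff.mp (mem_range.mp hi))]

theorem altSum_bounds (ha : StrictMonoOn a (Set.Iic h)) :
    0 < (-1) ^ h * altSum a h ∧ -2 ^ a h < altSum a h ∧ altSum a h ≤ 2 ^ a h := by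
  induction h with
  | zero => simp [altSum]
  | succ h ih =>
    obtain ⟨hsign, hlo, hhi⟩ := ih (ha.mono (Set.Iic_subset_Iic.mpr h.le_succ))
    have hlt : (2 : ℤ) ^ a h < 2 ^ a (h + 1) := pow_lt_pow_right₀ one_lt_two <|
      ha (Set.mem_Iic.mpr h.le_succ) Set.self_mem_Iic h.lt_succ_self
    rw [altSum_succ, pow_succ]
    rcases neg_one_pow_eq_or ℤ h with hε | hε <;> rw [hε] at hsign ⊢ <;>
      refine ⟨?_, ?_, ?_⟩ <;> linarith

theorem altSum_mem (ha : StrictMonoOn a (Set.Iic h)) (hm : a h ≤ m) :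
    altSum a h ∈ Set.Icc (-2 ^ m + 1 : ℤ) (2 ^ m) \ {0} := by
  obtain ⟨hsign, hlo, hhi⟩ := altSum_bounds ha
  have hpow : (2 : ℤ) ^ a h ≤ 2 ^ m := pow_le_pow_right₀ one_le_two hm
  refine ⟨⟨by linarith, by linarith⟩, fun h0 ↦ ?_⟩
  rw [Set.mem_singleton_iff.mp h0, mul_zero] at hsign
  exact hsign.false

theorem exists_extend_altSum (ha : StrictMonoOn a (Set.Iic h)) (hm : a h ≤ m) :
    ∃ b : ℕ → ℕ, StrictMonoOn b (Set.Iic (h + 1)) ∧ b (h + 1) = m + 1 ∧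
      altSum b (h + 1) = altSum a h - (-1) ^ h * 2 ^ (m + 1) := by
  refine ⟨Function.update a (h + 1) (m + 1), ?_, Function.update_self .., ?_⟩
  · intro i _ j (hj : j ≤ h + 1) hij
    have hih : i ≤ h := by omega
    rw [Function.update_of_ne (by omega)]
    rcases eq_or_ne j (h + 1) with rfl | hj'
    · rw [Function.update_self]
      exact ((ha.monotoneOn hih Set.self_mem_Iic hih).trans hm).trans_lt m.lt_succ_self
    · rw [Function.update_of_ne hj']
      exact ha hih (Set.mem_Iic.mpr (by omega)) hij
  · rw [altSum_succ, Function.update_self,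
      altSum_congr fun i hi ↦ Function.update_of_ne (by omega) (m + 1) a]

theorem sign_altSum (ha : StrictMonoOn a (Set.Iic h)) : (altSum a h).sign = (-1) ^ h := by
  have hsign := (altSum_bounds ha).1
  rcases neg_one_pow_eq_or ℤ h with hε | hε <;> rw [hε] at hsign ⊢
  · exact Int.sign_eq_one_of_pos (by linarith)
  · exact Int.sign_eq_neg_one_of_neg (by linarith)

theorem exists_altSum_eq_two_pow (m : ℕ) :
    ∃ h, ∃ a : ℕ → ℕ, StrictMonoOn a (Set.Iic h) ∧ a h ≤ m ∧ altSum a h = 2 ^ m :=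
  ⟨0, fun _ ↦ m, Set.Iic_bot (α := ℕ) ▸ Set.strictMonoOn_singleton _, le_rfl,
    by simp [altSum]⟩

theorem exists_altSum_eq (m : ℕ) {x : ℤ} (hx : x ∈ Set.Icc (-2 ^ m + 1 : ℤ) (2 ^ m) \ {0}) :
    ∃ h, ∃ a : ℕ → ℕ, StrictMonoOn a (Set.Iic h) ∧ a h ≤ m ∧ altSum a h = x := by
  induction m generalizing x with
  | zero =>
    obtain rfl : x = 2 ^ 0 := by
      obtain ⟨⟨hlo, hhi⟩, hx0⟩ := hx
      simp only [pow_zero, Set.mem_singleton_iff] at hlo hhi hx0 ⊢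
      omega
    exact exists_altSum_eq_two_pow 0
  | succ m ih =>
    obtain ⟨⟨hlo, hhi⟩, hx0 : x ≠ 0⟩ := hx
    by_cases hsmall : -2 ^ m + 1 ≤ x ∧ x ≤ 2 ^ m
    · obtain ⟨h, a, ha, hm, rfl⟩ := ih ⟨hsmall, hx0⟩
      exact ⟨h, a, ha, hm.trans m.le_succ, rfl⟩
    obtain rfl | htop := eq_or_ne x (2 ^ (m + 1))
    · exact exists_altSum_eq_two_pow (m + 1)
    have hpow : (2 : ℤ) ^ (m + 1) = 2 * 2 ^ m := pow_succ' 2 m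
    obtain ⟨y, hy, rfl⟩ :
        ∃ y ∈ Set.Icc (-2 ^ m + 1 : ℤ) (2 ^ m) \ {0}, y - y.sign * 2 ^ (m + 1) = x := by
      rcases hx0.lt_or_gt with hneg | hpos
      · refine ⟨x + 2 ^ (m + 1), ⟨⟨by omega, by omega⟩, fun h0 ↦ ?_⟩, ?_⟩
        · rw [Set.mem_singleton_iff] at h0
          omega
        rw [Int.sign_eq_one_of_pos (by omega)]
        ring
      · refine ⟨x - 2 ^ (m + 1), ⟨⟨by omega, by omega⟩, fun h0 ↦ ?_⟩, ?_⟩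
        · rw [Set.mem_singleton_iff] at h0
          omega
        rw [Int.sign_eq_neg_one_of_neg (by omega)]
        ring
    obtain ⟨h, a, ha, hm, rfl⟩ := ih hy
    obtain ⟨b, hb, hbm, hsum⟩ := exists_extend_altSum ha hm
    exact ⟨h + 1, b, hb, hbm.le, by rw [hsum, sign_altSum ha]⟩

end altSum

theorem stmt_17_general (n : ℕ) :
    altSums n =
      {x : ℤ | -2 ^ (n - 1) + 1 ≤ x ∧ x ≤ 2 ^ (n - 1)} \ {0} := by
  ext x
  constructor
  · rintro ⟨h, -, a, ha, hm, rfl⟩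
    exact altSum_mem ha hm
  · intro hx
    obtain ⟨h, a, ha, hm, rfl⟩ := exists_altSum_eq (n - 1) hx
    exact ⟨h, (ha.Iic_id_le h le_rfl).trans hm, a, ha, hm, rfl⟩

theorem stmt_17 (n : ℕ) (hn : 1 ≤ n) :
    altSums n =
      {x : ℤ | -2 ^ (n - 1) + 1 ≤ x ∧ x ≤ 2 ^ (n - 1)} \ {0} :=
  stmt_17_general n
end

section
/- For n ≥ 1 and any integer k with 1 ≤ k < 2^n, every residue class in {1, ..., k} modulo k+1 is represented by some element of X_n, where X_n is the set of alternating-sign sums Σ(−1)^i 2^{a_i} with 0 ≤ a_0 < ... < a_h ≤ n−1. -/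
def AltSumRep (e h : ℕ) (x : ℤ) : Prop :=
  ∃ a : ℕ → ℕ, StrictMonoOn a (Set.Iic h) ∧ a h ≤ e ∧
    x = ∑ i ∈ Finset.range (h + 1), (-1 : ℤ) ^ i * 2 ^ (a i)

namespace AltSumRep

variable {e h : ℕ} {x : ℤ}

theorem mono {e' : ℕ} (hx : AltSumRep e h x) (he : e ≤ e') : AltSumRep e' h x :=
  let ⟨a, ha, hae, hsum⟩ := hx
  ⟨a, ha, hae.trans he, hsum⟩

theorem two_pow (e : ℕ) : AltSumRep e 0 (2 ^ e) :=
  ⟨fun _ => e, fun i hi j hj hij => by simp only [Set.mem_Iic] at hi hj; omega, le_rfl, by simp⟩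

theorem append (hx : AltSumRep e h x) :
    AltSumRep (e + 1) (h + 1) (x + (-1) ^ (h + 1) * 2 ^ (e + 1)) := by
  obtain ⟨a, ha, hae, rfl⟩ := hx
  refine ⟨Function.update a (h + 1) (e + 1), ?_, by simp, ?_⟩
  · intro i hi j hj hij
    simp only [Set.mem_Iic] at hi hj
    have hi' : i ≤ h := by omega
    rw [Function.update_of_ne (by omega)]
    rcases hj.lt_or_eq with hj | rfl
    · rw [Function.update_of_ne (by omega)]
      exact ha hi' (Nat.le_of_lt_succ hj) hij
    · rw [Function.update_self]
      have := ha.monotoneOn hi' (Set.mem_Iic.2 le_rfl) hi'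
      omega
  · rw [Finset.sum_range_succ _ (h + 1), Function.update_self]
    congr 1
    refine Finset.sum_congr rfl fun i hi => ?_
    rw [Function.update_of_ne (by simp at hi; omega)]

theorem mem_altSums {n : ℕ} (hx : AltSumRep (n - 1) h x) : x ∈ altSums n :=
  let ⟨a, ha, hae, hsum⟩ := hx
  ⟨h, (ha.Iic_id_le h le_rfl).trans hae, a, ha, hae, hsum⟩

end AltSumRep

theorem exists_altSumRep (e : ℕ) {x : ℤ} (hlo : -2 ^ e < x) (hhi : x ≤ 2 ^ e) (hx : x ≠ 0) :
    ∃ h, (Even h ↔ 0 < x) ∧ AltSumRep e h x := by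
  induction e generalizing x with
  | zero =>
    obtain rfl : x = 1 := by simp at hlo hhi; omega
    exact ⟨0, by simp, by simpa using AltSumRep.two_pow 0⟩
  | succ e ih =>
    have hpow : (2 : ℤ) ^ (e + 1) = 2 * 2 ^ e := pow_succ' 2 e
    by_cases hmid : -2 ^ e < x ∧ x ≤ 2 ^ e
    · obtain ⟨h, hpar, hrep⟩ := ih hmid.1 hmid.2 hx
      exact ⟨h, hpar, hrep.mono e.le_succ⟩
    by_cases htop : x = 2 ^ (e + 1)
    · exact ⟨0, by simp [htop], htop ▸ AltSumRep.two_pow (e + 1)⟩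
    rcases not_and_or.1 hmid with hneg | hpos
    · obtain ⟨h, hpar, hrep⟩ := ih (x := x + 2 ^ (e + 1)) (by omega) (by omega) (by omega)
      have heven : Even h := hpar.2 (by omega)
      refine ⟨h + 1, by simp [Nat.even_add_one, heven]; omega, ?_⟩
      simpa [heven.neg_one_pow, pow_succ] using hrep.append
    · obtain ⟨h, hpar, hrep⟩ := ih (x := x - 2 ^ (e + 1)) (by omega) (by omega) (by omega)
      have hodd : ¬Even h := fun he => by have := hpar.1 he; omega
      refine ⟨h + 1, by simp [Nat.even_add_one, hodd]; omega, ?_⟩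
      simpa [(Nat.not_even_iff_odd.1 hodd).add_one.neg_one_pow] using hrep.append

theorem mem_altSums_succ {e : ℕ} {x : ℤ} (hlo : -2 ^ e < x) (hhi : x ≤ 2 ^ e) (hx : x ≠ 0) :
    x ∈ altSums (e + 1) :=
  let ⟨_, _, hrep⟩ := exists_altSumRep e hlo hhi hx
  hrep.mem_altSums (n := e + 1)

theorem stmt_18_general (n : ℕ) (k : ℕ) (hk2 : k < 2 ^ n) :
    ∀ j : ℕ, 1 ≤ j → j ≤ k →
      ∃ x ∈ altSums n, x ≡ (j : ℤ) [ZMOD ((k : ℤ) + 1)] := by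
  intro j hj1 hj2
  obtain ⟨e, rfl⟩ : ∃ e, n = e + 1 :=
    Nat.exists_eq_add_one_of_ne_zero fun hn => by subst hn; omega
  have hk : (k : ℤ) < 2 * 2 ^ e := by rw [← pow_succ']; exact_mod_cast hk2
  by_cases hj : (j : ℤ) ≤ 2 ^ e
  · exact ⟨j, mem_altSums_succ (by omega) hj (by omega), Int.ModEq.refl _⟩
  · exact ⟨j - (k + 1), mem_altSums_succ (by omega) (by omega) (by omega),
      Int.sub_modulus_modEq_iff.2 (Int.ModEq.refl _)⟩

theorem stmt_18 (n : ℕ) (hn : 1 ≤ n) (k : ℕ) (hk1 : 1 ≤ k) (hk2 : k < 2 ^ n) :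
    ∀ j : ℕ, 1 ≤ j → j ≤ k →
      ∃ x ∈ altSums n, x ≡ (j : ℤ) [ZMOD ((k : ℤ) + 1)] :=
  stmt_18_general n k hk2
end

section
/- Let p be an odd prime and D_{2p} the dihedral group of order 2p. Then γ_cp(D_{2p}) = ⌈log₂ p⌉ + 1; that is, the minimal number of pairwise conjugate proper subgroups whose setwise product equals D_{2p} is ⌈log₂ p⌉ + 1, achieved by conjugates of a reflection subgroup of order 2. -/
/-!
Conjugate subgroups have the same order, and a normal subgroup is its own only conjugate, so
in a factorization `G = A₁ ⋯ Aₖ` into conjugate proper subgroups the common subgroup `A` is not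
normal and `|G| ≤ |A| ^ k`. In `D_{2p}` a non-normal proper subgroup has order at most `2`
(order `p` means index `2`), whence `2p ≤ 2 ^ k`.

Conversely, the reflection subgroups `⟨sr a⟩` are pairwise conjugate because `2` is invertible
mod `p`, and `⟨sr 1⟩ ⟨sr 2⟩ ⋯ ⟨sr 2 ^ (m - 1)⟩ ⟨sr 0⟩` is all of `D_{2p}` once `p ≤ 2 ^ m`.
-/

open Pointwise

/-- `G` is a product, in some order, of `k` pairwise conjugate proper subgroups. -/
def IsConjProdCover {G : Type*} [Group G] (k : ℕ) : Prop :=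
  ∃ l : List (Subgroup G), l.length = k ∧ 2 ≤ l.length ∧
    (∀ A ∈ l, A ≠ ⊤) ∧ (∀ A ∈ l, ∀ B ∈ l, ∃ g : G, B = conjugate A g) ∧
    (l.map (fun A => (A : Set G))).prod = Set.univ

/-- `γ_cp(G)`: the minimal number of pairwise conjugate proper subgroups whose setwise
product is `G`; `⊤` (infinity) if no such factorization exists. -/
noncomputable def gammaCP (G : Type*) [Group G] : ℕ∞ :=
  sInf {k : ℕ∞ | ∃ n : ℕ, k = (n : ℕ∞) ∧ IsConjProdCover (G := G) n}

open Subgroup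

section ConjProdCover

variable {G : Type*} [Group G]

lemma card_conjugate (A : Subgroup G) (g : G) : Nat.card (conjugate A g) = Nat.card A :=
  (Nat.card_congr
    (A.equivMapOfInjective (MulAut.conj g⁻¹).toMonoidHom (MulAut.conj g⁻¹).injective).toEquiv).symm

lemma conjugate_eq_self (A : Subgroup G) [A.Normal] (g : G) : conjugate A g = A :=
  Normal.map_conj_eq A g⁻¹

lemma natCard_list_prod_le {M : Type*} [Monoid M] [IsCancelMul M] (l : List (Set M)) {k : ℕ}
    (h : ∀ s ∈ l, Nat.card s ≤ k) : Nat.card l.prod ≤ k ^ l.length := by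
  induction l with
  | nil => simp
  | cons s t ih =>
    rw [List.prod_cons, List.length_cons, pow_succ']
    exact Set.natCard_mul_le.trans (Nat.mul_le_mul (h s (by simp))
      (ih fun u hu => h u (List.mem_cons_of_mem _ hu)))

lemma isConjProdCover_iff {k : ℕ} : IsConjProdCover (G := G) k ↔
    ∃ l : List (Subgroup G), l.length = k ∧ 2 ≤ l.length ∧ (∀ A ∈ l, A ≠ ⊤) ∧
      (∀ A ∈ l, ∀ B ∈ l, ∃ g : G, B = conjugate A g) ∧ (l.map SetLike.coe).prod = Set.univ := by
  simp [IsConjProdCover, List.flatMap, Function.comp_def]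

lemma IsConjProdCover.exists_subgroup {n : ℕ} (h : IsConjProdCover (G := G) n) :
    ∃ A : Subgroup G, A ≠ ⊤ ∧ ¬ A.Normal ∧ Nat.card G ≤ Nat.card A ^ n := by
  obtain ⟨l, rfl, hlen, hproper, hconj, hprod⟩ := isConjProdCover_iff.mp h
  obtain ⟨A, l', rfl⟩ : ∃ A l', l = A :: l' := List.exists_cons_of_length_pos (by omega)
  have hA : A ∈ A :: l' := List.mem_cons_self
  refine ⟨A, hproper A hA, fun hN => hproper A hA ?_, ?_⟩
  · have hrep : A :: l' = List.replicate (A :: l').length A :=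
      List.eq_replicate_iff.mpr ⟨rfl, fun B hB => by
        obtain ⟨g, rfl⟩ := hconj A hA B hB
        exact conjugate_eq_self A g⟩
    rw [hrep, List.map_replicate, List.prod_replicate, coe_set_pow (by simp)] at hprod
    exact coe_eq_univ.mp hprod
  · rw [← Nat.card_univ, ← hprod, ← List.length_map (f := SetLike.coe)]
    refine natCard_list_prod_le _ fun s hs => ?_
    obtain ⟨B, hB, rfl⟩ := List.mem_map.mp hs
    obtain ⟨g, rfl⟩ := hconj A hA B hB
    exact (card_conjugate A g).le

lemma gammaCP_eq_of_isConjProdCover {n : ℕ} (h : IsConjProdCover (G := G) n)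
    (hmin : ∀ k, IsConjProdCover (G := G) k → n ≤ k) : gammaCP G = n :=
  le_antisymm (sInf_le ⟨n, rfl, h⟩) <| le_sInf fun _ ⟨k, hk, hcov⟩ => hk ▸ mod_cast hmin k hcov

end ConjProdCover

lemma ZMod.exists_lt_eq_or_eq_neg_succ {p L : ℕ} [NeZero p] (h : p ≤ 2 * L) (a : ZMod p) :
    ∃ n < L, a = n ∨ a = -(n + 1) := by
  by_cases ha : a.val < L
  · exact ⟨a.val, ha, .inl (ZMod.natCast_zmod_val a).symm⟩
  · have hap := ZMod.val_lt a
    refine ⟨p - 1 - a.val, by omega, .inr ?_⟩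
    have hsum : ((p - 1 - a.val + 1 + a.val : ℕ) : ZMod p) = 0 := by
      rw [show p - 1 - a.val + 1 + a.val = p by omega, ZMod.natCast_self]
    rw [Nat.cast_add, Nat.cast_add, Nat.cast_one, ZMod.natCast_zmod_val] at hsum
    linear_combination hsum

namespace DihedralGroup

variable {p : ℕ}

lemma card_le_two_of_not_normal (hp : p.Prime) {A : Subgroup (DihedralGroup p)} (htop : A ≠ ⊤)
    (hN : ¬ A.Normal) : Nat.card A ≤ 2 := by
  have : NeZero p := ⟨hp.ne_zero⟩
  have hdvd : Nat.card A ∣ 2 * p := nat_card (n := p) ▸ card_subgroup_dvd_card A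
  obtain ⟨a, b, ha, hb, hab⟩ := Nat.dvd_mul.mp hdvd
  rcases (Nat.dvd_prime Nat.prime_two).mp ha with rfl | rfl <;>
    rcases (Nat.dvd_prime hp).mp hb with hb | hb <;> subst b
  · omega
  · refine absurd (normal_of_index_eq_two ?_) hN
    have := card_mul_index A
    rw [nat_card, ← hab, one_mul] at this
    exact Nat.eq_of_mul_eq_mul_left hp.pos (this.trans (mul_comm 2 p))
  · omega
  · exact absurd (eq_top_of_card_eq A (by rw [nat_card, hab])) htop

lemma conjugate_zpowers_sr (a t : ZMod p) :
    conjugate (zpowers (sr a)) (r t) = zpowers (sr (a + 2 * t)) := by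
  rw [conjugate, MonoidHom.map_zpowers]
  congr 1
  change (r t)⁻¹ * sr a * (r t)⁻¹⁻¹ = _
  rw [inv_inv, inv_r, r_mul_sr, sr_mul_r]
  congr 1
  ring

lemma exists_conjugate_zpowers_sr (hodd : Odd p) (a b : ZMod p) :
    ∃ g, zpowers (sr b) = conjugate (zpowers (sr a)) g := by
  have h2 : IsUnit (2 : ZMod p) := by
    exact_mod_cast (ZMod.isUnit_iff_coprime 2 p).mpr (Nat.coprime_two_left.mpr hodd)
  obtain ⟨t, ht⟩ := h2.dvd (a := b - a)
  exact ⟨r t, by rw [conjugate_zpowers_sr, ← ht, add_sub_cancel]⟩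

lemma zpowers_sr_ne_top (hp : p ≠ 1) (a : ZMod p) : zpowers (sr a) ≠ ⊤ := by
  intro h
  have := card_top (G := DihedralGroup p)
  rw [← h, Nat.card_zpowers, orderOf_sr, nat_card] at this
  omega

def reflProd (p m : ℕ) : Set (DihedralGroup p) :=
  ((List.range m).map fun j => (zpowers (sr ((2 : ZMod p) ^ j)) : Set (DihedralGroup p))).prod

lemma reflProd_succ (m : ℕ) :
    reflProd p (m + 1) = reflProd p m * (zpowers (sr ((2 : ZMod p) ^ m)) : Set _) := by
  rw [reflProd, reflProd, List.range_succ, List.map_append, List.prod_append, List.map_singleton,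
    List.prod_singleton]

lemma mem_mul_zpowers_sr {x : DihedralGroup p} {s : Set (DihedralGroup p)} (hx : x ∈ s)
    (c : ZMod p) : x ∈ s * (zpowers (sr c) : Set _) ∧ x * sr c ∈ s * (zpowers (sr c) : Set _) :=
  ⟨mul_one x ▸ Set.mul_mem_mul hx (one_mem _), Set.mul_mem_mul hx (mem_zpowers _)⟩

/-- Right multiplication by `sr (2 ^ (m + 1))` maps the pair `r n`, `sr (n + 1)` to the pair for
`2 ^ (m + 1) - 1 - n`. -/
lemma r_mem_reflProd_and_sr_mem (m : ℕ) {n : ℕ} (hn : n < 2 ^ m) :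
    r (n : ZMod p) ∈ reflProd p (m + 1) ∧ sr ((n : ZMod p) + 1) ∈ reflProd p (m + 1) := by
  induction m generalizing n with
  | zero =>
    obtain rfl : n = 0 := by omega
    simp only [reflProd, List.range_one, List.map_singleton, List.prod_singleton, pow_zero,
      Nat.cast_zero, zero_add, ← one_def, SetLike.mem_coe]
    exact ⟨one_mem _, mem_zpowers _⟩
  | succ m ih =>
    rw [reflProd_succ]
    by_cases hlt : n < 2 ^ m
    · exact ⟨(mem_mul_zpowers_sr (ih hlt).1 _).1, (mem_mul_zpowers_sr (ih hlt).2 _).1⟩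
    · set k := 2 ^ (m + 1) - 1 - n
      have hk : ((k + n + 1 : ℕ) : ZMod p) = ((2 ^ (m + 1) : ℕ) : ZMod p) :=
        congrArg _ (by grind)
      push_cast at hk
      obtain ⟨hr, hsr⟩ := ih (n := k) (by grind)
      constructor
      · convert (mem_mul_zpowers_sr hsr _).2 using 1
        rw [sr_mul_sr]
        congr 1
        linear_combination hk
      · convert (mem_mul_zpowers_sr hr _).2 using 1
        rw [r_mul_sr]
        congr 1
        linear_combination hk

lemma reflProd_mul_zpowers_sr_zero [NeZero p] {m : ℕ} (h : p ≤ 2 ^ (m + 1)) :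
    reflProd p (m + 1) * (zpowers (sr (0 : ZMod p)) : Set _) = Set.univ := by
  have h' : p ≤ 2 * 2 ^ m := by rwa [pow_succ'] at h
  refine Set.eq_univ_of_forall fun x => ?_
  cases x with
  | r a =>
    obtain ⟨n, hn, rfl | rfl⟩ := ZMod.exists_lt_eq_or_eq_neg_succ h' a
    · exact (mem_mul_zpowers_sr (r_mem_reflProd_and_sr_mem m hn).1 0).1
    · convert (mem_mul_zpowers_sr (r_mem_reflProd_and_sr_mem m hn).2 0).2 using 1
      rw [sr_mul_sr, zero_sub]
  | sr a =>
    obtain ⟨n, hn, ha | ha⟩ := ZMod.exists_lt_eq_or_eq_neg_succ h' (-a)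
    · rw [neg_eq_iff_eq_neg.mp ha]
      convert (mem_mul_zpowers_sr (r_mem_reflProd_and_sr_mem m hn).1 0).2 using 1
      rw [r_mul_sr, zero_sub]
    · rw [neg_inj.mp ha]
      exact (mem_mul_zpowers_sr (r_mem_reflProd_and_sr_mem m hn).2 0).1

lemma isConjProdCover_clog_succ (hp : 1 < p) (hodd : Odd p) :
    IsConjProdCover (G := DihedralGroup p) (Nat.clog 2 p + 1) := by
  have : NeZero p := ⟨by omega⟩
  obtain ⟨m, hm⟩ : ∃ m, Nat.clog 2 p = m + 1 :=
    Nat.exists_eq_add_one.mpr (Nat.clog_pos one_lt_two hp)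
  let l := (List.range (m + 1)).map (fun j => zpowers (sr ((2 : ZMod p) ^ j))) ++ [zpowers (sr 0)]
  have hl : ∀ A ∈ l, ∃ a, A = zpowers (sr a) := by
    simp only [l, List.mem_append, List.mem_map, List.mem_singleton]
    rintro A (⟨j, -, rfl⟩ | rfl) <;> exact ⟨_, rfl⟩
  refine isConjProdCover_iff.mpr ⟨l, by simp [l, hm], by simp [l], fun A hA => ?_,
    fun A hA B hB => ?_, ?_⟩
  · obtain ⟨a, rfl⟩ := hl A hA
    exact zpowers_sr_ne_top hp.ne' a
  · obtain ⟨a, rfl⟩ := hl A hA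
    obtain ⟨b, rfl⟩ := hl B hB
    exact exists_conjugate_zpowers_sr hodd a b
  · rw [List.map_append, List.prod_append, List.map_map, List.map_singleton, List.prod_singleton]
    exact reflProd_mul_zpowers_sr_zero (hm ▸ Nat.le_pow_clog one_lt_two p)

lemma clog_succ_le_of_isConjProdCover (hp : p.Prime) {n : ℕ}
    (h : IsConjProdCover (G := DihedralGroup p) n) : Nat.clog 2 p + 1 ≤ n := by
  obtain ⟨A, htop, hN, hcard⟩ := h.exists_subgroup
  have h2p : 2 * p ≤ 2 ^ n := calc
    2 * p = Nat.card (DihedralGroup p) := nat_card.symm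
    _ ≤ Nat.card A ^ n := hcard
    _ ≤ 2 ^ n := Nat.pow_le_pow_left (card_le_two_of_not_normal hp htop hN) n
  have hclog : Nat.clog 2 (2 * p) = Nat.clog 2 p + 1 := by
    rw [Nat.clog_of_two_le one_lt_two (by linarith [hp.two_le])]
    congr 2
    omega
  exact hclog ▸ Nat.clog_le_of_le_pow h2p

end DihedralGroup

theorem stmt_19 (p : ℕ) (hp : p.Prime) (hodd : p ≠ 2) :
    gammaCP (DihedralGroup p) = ((Nat.clog 2 p + 1 : ℕ) : ℕ∞) :=
  gammaCP_eq_of_isConjProdCover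
    (DihedralGroup.isConjProdCover_clog_succ hp.one_lt (hp.odd_of_ne_two hodd))
    fun _ => DihedralGroup.clog_succ_le_of_isConjProdCover hp
end
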